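/- Let (π, T) be a representation of L on a Hilbert space H. Then for every n ≥ 1, every a ∈ C₀(Δ_n) and every b ∈ C₀(X): (i) the function Lⁿ(a) : y ↦ Σ_{x∈φ⁻ⁿ(y)} ρ_n(x)a(x) belongs to C₀(X) and (T*)ⁿ π(a) Tⁿ = π(Lⁿ(a)); (ii) the function a·(b∘φⁿ) (equal to a(x)b(φⁿ(x)) on Δ_n and 0 elsewhere) belongs to C₀(Δ_n) and π(a) Tⁿ π(b) = π(a·(b∘φⁿ)) Tⁿ. -/

import Mathlib

/-!
Part (i) is an induction on `n`: since `Lⁿ⁺¹ = Lⁿ ∘ L` (split the fibre of `φⁿ⁺¹` over the fibres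
of `φ` above the fibre of `φⁿ`), `(T*)ⁿ⁺¹ π(a) Tⁿ⁺¹ = (T*)ⁿ π(L a) Tⁿ = π(Lⁿ⁺¹ a)`.
For part (ii) put `A = π(a) Tⁿ π(b)` and `B = π(c) Tⁿ` with `c = a·(b∘φⁿ)`. By (i), for every `d`,
`(T*)ⁿ π(d) A = π(Lⁿ(d a) b) = π(Lⁿ(d c)) = (T*)ⁿ π(d) B`; taking `d = ā` and `d = c̄` gives
`A*A = A*B` and `B*A = B*B`, so `(A - B)*(A - B) = 0` and `A = B` by the C*-identity.
-/

open scoped ZeroAtInfty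

noncomputable section

variable {X : Type*} [TopologicalSpace X]

/-- The fibre of `φ : Δ → X` over `y`. -/
def Fiber (Δ : Set X) (φ : X → X) (y : X) : Set X := {x | x ∈ Δ ∧ φ x = y}

/-- `ρ : Δ → [0,∞)` is a potential with bound `M`: it is nonnegative on `Δ`, the sums
`Σ_{x ∈ φ⁻¹(y)} ρ(x)` are (summable and) bounded by `M`, and for every `a ∈ C₀(Δ)` the
function `L(a)(y) = Σ_{x ∈ φ⁻¹(y)} ρ(x) a(x)` belongs to `C₀(X)`. -/
def IsPotential (Δ : Set X) (φ : X → X) (ρ : X → ℝ) (M : ℝ) : Prop :=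
  (∀ x ∈ Δ, 0 ≤ ρ x) ∧
  (∀ y : X, Summable fun x : Fiber Δ φ y => ρ x.1) ∧
  (∀ y : X, (∑' x : Fiber Δ φ y, ρ x.1) ≤ M) ∧
  ∀ a : C₀(X, ℂ), (∀ x ∉ Δ, a x = 0) →
    ∃ b : C₀(X, ℂ), ∀ y : X, b y = ∑' x : Fiber Δ φ y, (ρ x.1 : ℂ) * a x.1

/-- `Δ_pos`: the set of points of `Δ` where `ρ` is strictly positive. -/
def Dpos (Δ : Set X) (ρ : X → ℝ) : Set X := {x | x ∈ Δ ∧ 0 < ρ x}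

/-- `Δ_reg`: the set of points of `Δ_pos` where `ρ` (as a function on `Δ`) is continuous. -/
def Dreg (Δ : Set X) (ρ : X → ℝ) : Set X :=
  {x | x ∈ Δ ∧ 0 < ρ x ∧ ContinuousWithinAt ρ Δ x}

/-- A representation `(π, T)` of the transfer operator `L` determined by `(Δ, φ, ρ)`:
`π` is a nondegenerate *-representation of `C₀(X)` and `T` satisfies
`π(L(a)) = T* π(a) T` for all `a ∈ C₀(Δ)`. -/
def IsRep (Δ : Set X) (φ : X → X) (ρ : X → ℝ) {H : Type*} [NormedAddCommGroup H]
    [InnerProductSpace ℂ H] [CompleteSpace H]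
    (π : C₀(X, ℂ) →⋆ₙₐ[ℂ] (H →L[ℂ] H)) (T : H →L[ℂ] H) : Prop :=
  Dense (↑(Submodule.span ℂ {v : H | ∃ (a : C₀(X, ℂ)) (h : H), π a h = v}) : Set H) ∧
  ∀ a b : C₀(X, ℂ), (∀ x ∉ Δ, a x = 0) →
    (∀ y : X, b y = ∑' x : Fiber Δ φ y, (ρ x.1 : ℂ) * a x.1) →
    π b = star T * π a * T

/-- `Δ_n`: the natural domain of `φⁿ`. -/
def Dn (Δ : Set X) (φ : X → X) (n : ℕ) : Set X := {x | ∀ k < n, φ^[k] x ∈ Δ}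

/-- `ρ_n(x) = Π_{i=0}^{n-1} ρ(φⁱ(x))`, the cocycle generated by `ρ`. -/
def rhon (φ : X → X) (ρ : X → ℝ) (n : ℕ) (x : X) : ℝ :=
  ∏ i ∈ Finset.range n, ρ (φ^[i] x)

/-- The fibre of `φⁿ` over `y`. -/
def Fibern (Δ : Set X) (φ : X → X) (n : ℕ) (y : X) : Set X :=
  {x | x ∈ Dn Δ φ n ∧ φ^[n] x = y}

section Iterates

variable {α : Type*} {Δ : Set α} {φ : α → α}

theorem mem_Dn_succ {n : ℕ} {x : α} : x ∈ Dn Δ φ (n + 1) ↔ x ∈ Δ ∧ φ x ∈ Dn Δ φ n := by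
  simp only [Dn, Set.mem_ofPred_eq, Nat.forall_lt_succ_left, Function.iterate_succ_apply,
    Function.iterate_zero_apply]

theorem Dn_succ_subset (n : ℕ) : Dn Δ φ (n + 1) ⊆ Δ := fun _ hx => (mem_Dn_succ.mp hx).1

theorem isOpen_Dn [TopologicalSpace α] (hΔ : IsOpen Δ) (hφ : ContinuousOn φ Δ) (n : ℕ) :
    IsOpen (Dn Δ φ n) := by
  induction n with
  | zero => simp [Dn]
  | succ n ih =>
    have hDn : Dn Δ φ (n + 1) = Δ ∩ φ ⁻¹' Dn Δ φ n := Set.ext fun _ => mem_Dn_succ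
    exact hDn ▸ hφ.isOpen_inter_preimage hΔ ih

theorem continuousOn_iterate_Dn [TopologicalSpace α] (hφ : ContinuousOn φ Δ) (n : ℕ) :
    ContinuousOn φ^[n] (Dn Δ φ n) := by
  induction n with
  | zero => exact continuousOn_id
  | succ n ih =>
    exact ih.comp (hφ.mono (Dn_succ_subset n)) fun _ hx => (mem_Dn_succ.mp hx).2

theorem rhon_succ (ρ : α → ℝ) (n : ℕ) (x : α) : rhon φ ρ (n + 1) x = ρ x * rhon φ ρ n (φ x) := by
  simp only [rhon, Finset.prod_range_succ', Function.iterate_succ_apply,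
    Function.iterate_zero_apply, mul_comm]

theorem rhon_nonneg {ρ : α → ℝ} (hρ : ∀ x ∈ Δ, 0 ≤ ρ x) {n : ℕ} {x : α} (hx : x ∈ Dn Δ φ n) :
    0 ≤ rhon φ ρ n x :=
  Finset.prod_nonneg fun i hi => hρ _ (hx i (Finset.mem_range.mp hi))

theorem fibern_zero (y : α) : Fibern Δ φ 0 y = {y} := by
  ext x
  simp [Fibern, Dn, eq_comm]

variable (Δ φ) in
def fibernSuccEquiv (n : ℕ) (y : α) :
    (Σ x : Fibern Δ φ n y, Fiber Δ φ x.1) ≃ Fibern Δ φ (n + 1) y where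
  toFun p := ⟨p.2.1, mem_Dn_succ.mpr ⟨p.2.2.1, by rw [p.2.2.2]; exact p.1.2.1⟩, by
    rw [Function.iterate_succ_apply, p.2.2.2, p.1.2.2]⟩
  invFun z := ⟨⟨φ z.1, (mem_Dn_succ.mp z.2.1).2, by rw [← Function.iterate_succ_apply, z.2.2]⟩,
    ⟨z.1, (mem_Dn_succ.mp z.2.1).1, rfl⟩⟩
  left_inv := by
    rintro ⟨⟨x, hx⟩, z, hzΔ, hz⟩
    obtain rfl : φ z = x := hz
    rfl
  right_inv _ := rfl

variable (Δ φ)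

def transfer (ρ : α → ℝ) (a : α → ℂ) (y : α) : ℂ :=
  ∑' x : Fiber Δ φ y, (ρ x.1 : ℂ) * a x.1

def iterTransfer (ρ : α → ℝ) (n : ℕ) (a : α → ℂ) (y : α) : ℂ :=
  ∑' x : Fibern Δ φ n y, (rhon φ ρ n x.1 : ℂ) * a x.1

variable {Δ φ} {ρ : α → ℝ}

theorem iterTransfer_zero (a : α → ℂ) : iterTransfer Δ φ ρ 0 a = a := by
  ext y
  simp only [iterTransfer, rhon, Finset.range_zero, Finset.prod_empty, Complex.ofReal_one, one_mul]
  rw [fibern_zero, tsum_singleton]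

theorem transfer_eq_zero_of_notMem_Dn {n : ℕ} {a : α → ℂ} (ha : ∀ x ∉ Dn Δ φ (n + 1), a x = 0)
    {y : α} (hy : y ∉ Dn Δ φ n) : transfer Δ φ ρ a y = 0 := by
  refine (tsum_congr fun x => ?_).trans tsum_zero
  have hx : x.1 ∉ Dn Δ φ (n + 1) := fun hx => hy (x.2.2 ▸ (mem_Dn_succ.mp hx).2)
  rw [ha x.1 hx, mul_zero]

theorem iterTransfer_mul_of_eq_mul_comp {n : ℕ} {a b c : α → ℂ}
    (hc : ∀ x ∈ Dn Δ φ n, c x = a x * b (φ^[n] x)) (d : α → ℂ) (y : α) :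
    iterTransfer Δ φ ρ n (fun x => d x * c x) y
      = iterTransfer Δ φ ρ n (fun x => d x * a x) y * b y := by
  simp only [iterTransfer, ← tsum_mul_right]
  refine tsum_congr fun x => ?_
  rw [hc x.1 x.2.1, x.2.2]
  ring

end Iterates

section Summability

variable {Δ : Set X} {φ : X → X} {ρ : X → ℝ} {M : ℝ}

theorem summable_rhon (hpot : IsPotential Δ φ ρ M) (n : ℕ) (y : X) :
    Summable fun x : Fibern Δ φ n y => rhon φ ρ n x.1 := by
  obtain ⟨hρ, hsum, hM, -⟩ := hpot
  induction n generalizing y with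
  | zero =>
    rw [fibern_zero]
    exact .of_finite
  | succ n ih =>
    rw [← (fibernSuccEquiv Δ φ n y).summable_iff]
    have hfactor (x : Fibern Δ φ n y) (z : Fiber Δ φ x.1) :
        rhon φ ρ (n + 1) ((fibernSuccEquiv Δ φ n y) ⟨x, z⟩).1 = ρ z.1 * rhon φ ρ n x.1 := by
      change rhon φ ρ (n + 1) z.1 = _
      rw [rhon_succ, z.2.2]
    have hnonneg (x : Fibern Δ φ n y) (z : Fiber Δ φ x.1) :
        0 ≤ rhon φ ρ (n + 1) ((fibernSuccEquiv Δ φ n y) ⟨x, z⟩).1 :=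
      rhon_nonneg hρ ((fibernSuccEquiv Δ φ n y) ⟨x, z⟩).2.1
    refine (summable_sigma_of_nonneg fun p => rhon_nonneg hρ ((fibernSuccEquiv Δ φ n y) p).2.1).mpr
      ⟨fun x => ?_, ?_⟩
    · simpa only [hfactor] using (hsum x.1).mul_right (rhon φ ρ n x.1)
    · refine ((ih y).mul_left M).of_nonneg_of_le (fun x => tsum_nonneg (hnonneg x)) fun x => ?_
      simp only [hfactor, tsum_mul_right]
      exact mul_le_mul_of_nonneg_right (hM x.1) (rhon_nonneg hρ x.2.1)

theorem summable_rhon_mul (hpot : IsPotential Δ φ ρ M) (n : ℕ) (y : X) (a : C₀(X, ℂ)) :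
    Summable fun x : Fibern Δ φ n y => (rhon φ ρ n x.1 : ℂ) * a x.1 := by
  refine Summable.of_norm (((summable_rhon hpot n y).mul_right ‖a.toBCF‖).of_nonneg_of_le
    (fun _ => norm_nonneg _) fun x => ?_)
  rw [norm_mul, Complex.norm_real, Real.norm_of_nonneg (rhon_nonneg hpot.1 x.2.1)]
  exact mul_le_mul_of_nonneg_left (a.toBCF.norm_coe_le_norm x.1) (rhon_nonneg hpot.1 x.2.1)

theorem iterTransfer_succ (hpot : IsPotential Δ φ ρ M) (n : ℕ) (a : C₀(X, ℂ)) :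
    iterTransfer Δ φ ρ (n + 1) a = iterTransfer Δ φ ρ n (transfer Δ φ ρ a) := by
  ext y
  let e := fibernSuccEquiv Δ φ n y
  have hsummable : Summable fun p => (rhon φ ρ (n + 1) (e p).1 : ℂ) * a (e p).1 :=
    e.summable_iff.mpr (summable_rhon_mul hpot (n + 1) y a)
  calc iterTransfer Δ φ ρ (n + 1) a y
      = ∑' p, (rhon φ ρ (n + 1) (e p).1 : ℂ) * a (e p).1 := (e.tsum_eq _).symm
    _ = ∑' (x : Fibern Δ φ n y) (z : Fiber Δ φ x.1), (rhon φ ρ n x.1 : ℂ) * (ρ z.1 * a z.1) := by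
      rw [hsummable.tsum_sigma]
      refine tsum_congr fun x => tsum_congr fun z => ?_
      simp only [e, fibernSuccEquiv, Equiv.coe_fn_mk, rhon_succ, z.2.2, Complex.ofReal_mul]
      ring
    _ = iterTransfer Δ φ ρ n (transfer Δ φ ρ a) y := by
      simp only [iterTransfer, transfer, tsum_mul_left]

end Summability

theorem ZeroAtInftyContinuousMap.exists_eq_indicator_mul {R : Type*} [NormedRing R] {U : Set X}
    (hU : IsOpen U) (a : C₀(X, R)) (ha : ∀ x ∉ U, a x = 0) {g : X → R} (hg : ContinuousOn g U)
    {C : ℝ} (hC : ∀ x ∈ U, ‖g x‖ ≤ C) :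
    ∃ c : C₀(X, R), ⇑c = U.indicator fun x => a x * g x := by
  set f := U.indicator fun x => a x * g x
  -- off `U` both sides vanish, whatever the sign of `C`
  have hbound (x : X) : ‖f x‖ ≤ ‖a x‖ * C := by
    by_cases hx : x ∈ U
    · simp only [f, Set.indicator_of_mem hx]
      exact (norm_mul_le _ _).trans (mul_le_mul_of_nonneg_left (hC x hx) (norm_nonneg _))
    · simp [f, Set.indicator_of_notMem hx, ha x hx]
  have hcont : Continuous f := continuous_iff_continuousAt.mpr fun x => by
    by_cases hx : x ∈ U
    · refine ((a.continuous.continuousOn.mul hg).congr fun y hy => ?_).continuousAt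
        (hU.mem_nhds hx)
      exact Set.indicator_of_mem hy _
    · have hlim : Filter.Tendsto (fun y => ‖a y‖ * C) (nhds x) (nhds 0) := by
        simpa [ha x hx] using (a.continuous.norm.mul_const C).tendsto x
      simpa [ContinuousAt, f, Set.indicator_of_notMem hx] using squeeze_zero_norm hbound hlim
  have hzero : Filter.Tendsto f (Filter.cocompact X) (nhds 0) := by
    refine squeeze_zero_norm hbound ?_
    simpa using ((zero_at_infty a).norm.mul_const C)
  exact ⟨⟨⟨f, hcont⟩, hzero⟩, rfl⟩

theorem CStarRing.eq_of_star_mul_eq {A : Type*} [NonUnitalNormedRing A] [StarRing A] [CStarRing A]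
    {x y : A} (hx : star x * x = star x * y) (hy : star y * x = star y * y) : x = y := by
  rw [← sub_eq_zero, ← CStarRing.star_mul_self_eq_zero_iff, star_sub, sub_mul, mul_sub, mul_sub,
    hx, hy, sub_self, sub_self, sub_zero]

section Representation

variable {Δ : Set X} {φ : X → X} {ρ : X → ℝ} {M : ℝ}
  {H : Type*} [NormedAddCommGroup H] [InnerProductSpace ℂ H] [CompleteSpace H]
  {π : C₀(X, ℂ) →⋆ₙₐ[ℂ] (H →L[ℂ] H)} {T : H →L[ℂ] H}

theorem IsRep.exists_conj_pow_eq_iterTransfer (hrep : IsRep Δ φ ρ π T)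
    (hpot : IsPotential Δ φ ρ M) (n : ℕ) (a : C₀(X, ℂ)) (ha : ∀ x ∉ Dn Δ φ n, a x = 0) :
    ∃ La : C₀(X, ℂ), ⇑La = iterTransfer Δ φ ρ n a ∧ star T ^ n * π a * T ^ n = π La := by
  induction n generalizing a with
  | zero => exact ⟨a, (iterTransfer_zero a).symm, by simp⟩
  | succ n ih =>
    have haΔ (x : X) (hx : x ∉ Δ) : a x = 0 := ha x fun h => hx (Dn_succ_subset n h)
    obtain ⟨L₁, hL₁⟩ := hpot.2.2.2 a haΔ
    obtain ⟨La, hLa, hrel⟩ :=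
      ih L₁ fun y hy => (hL₁ y).trans (transfer_eq_zero_of_notMem_Dn ha hy)
    refine ⟨La, ?_, ?_⟩
    · rw [hLa, iterTransfer_succ hpot, funext hL₁]
      rfl
    · rw [← hrel, hrep.2 a L₁ haΔ hL₁, pow_succ, pow_succ']
      simp only [mul_assoc]

theorem IsRep.conj_pow_mul_eq_of_eq_mul_comp (hrep : IsRep Δ φ ρ π T) (hpot : IsPotential Δ φ ρ M)
    {n : ℕ} {a b c : C₀(X, ℂ)} (ha : ∀ x ∉ Dn Δ φ n, a x = 0)
    (hc : ∀ x ∈ Dn Δ φ n, c x = a x * b (φ^[n] x)) (hc₀ : ∀ x ∉ Dn Δ φ n, c x = 0)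
    (d : C₀(X, ℂ)) :
    star T ^ n * π d * (π a * T ^ n * π b) = star T ^ n * π d * (π c * T ^ n) := by
  obtain ⟨L₁, hL₁, hrel₁⟩ :=
    hrep.exists_conj_pow_eq_iterTransfer hpot n (d * a) fun x hx => by simp [ha x hx]
  obtain ⟨L₂, hL₂, hrel₂⟩ :=
    hrep.exists_conj_pow_eq_iterTransfer hpot n (d * c) fun x hx => by simp [hc₀ x hx]
  have hL : L₂ = L₁ * b := by
    ext y
    simp only [hL₁, hL₂, ZeroAtInftyContinuousMap.mul_apply]
    exact iterTransfer_mul_of_eq_mul_comp hc d y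
  calc star T ^ n * π d * (π a * T ^ n * π b)
      = star T ^ n * π (d * a) * T ^ n * π b := by simp only [map_mul, mul_assoc]
    _ = star T ^ n * π (d * c) * T ^ n := by rw [hrel₁, hrel₂, hL, map_mul]
    _ = star T ^ n * π d * (π c * T ^ n) := by simp only [map_mul, mul_assoc]

theorem IsRep.map_mul_pow_mul_eq (hrep : IsRep Δ φ ρ π T) (hpot : IsPotential Δ φ ρ M)
    {n : ℕ} {a b c : C₀(X, ℂ)} (ha : ∀ x ∉ Dn Δ φ n, a x = 0)
    (hc : ∀ x ∈ Dn Δ φ n, c x = a x * b (φ^[n] x)) (hc₀ : ∀ x ∉ Dn Δ φ n, c x = 0) :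
    π a * T ^ n * π b = π c * T ^ n := by
  have key := hrep.conj_pow_mul_eq_of_eq_mul_comp hpot ha hc hc₀
  refine CStarRing.eq_of_star_mul_eq ?_ ?_
  · have := congrArg (π (star b) * ·) (key (star a))
    simpa only [star_mul, star_pow, ← map_star, mul_assoc] using this
  · simpa only [star_mul, star_pow, ← map_star, mul_assoc] using key (star c)

end Representation

theorem representation_iterated_relations_general
    {X : Type*} [TopologicalSpace X]
    (Δ : Set X) (φ : X → X) (ρ : X → ℝ) (M : ℝ)
    (hΔ : IsOpen Δ) (hφ : ContinuousOn φ Δ)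
    (hpot : IsPotential Δ φ ρ M)
    {H : Type*} [NormedAddCommGroup H] [InnerProductSpace ℂ H] [CompleteSpace H]
    (π : C₀(X, ℂ) →⋆ₙₐ[ℂ] (H →L[ℂ] H)) (T : H →L[ℂ] H)
    (hrep : IsRep Δ φ ρ π T)
    (n : ℕ) :
    ∀ a : C₀(X, ℂ), (∀ x ∉ Dn Δ φ n, a x = 0) →
      -- (i)
      ((∃ La : C₀(X, ℂ),
          (∀ y : X, La y = ∑' x : Fibern Δ φ n y, (rhon φ ρ n x.1 : ℂ) * a x.1) ∧
          (star T) ^ n * π a * T ^ n = π La) ∧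
      -- (ii)
       (∀ b : C₀(X, ℂ), ∃ c : C₀(X, ℂ),
          (∀ x ∈ Dn Δ φ n, c x = a x * b (φ^[n] x)) ∧ (∀ x ∉ Dn Δ φ n, c x = 0) ∧
          π a * T ^ n * π b = π c * T ^ n)) := by
  intro a ha
  refine ⟨?_, fun b => ?_⟩
  · obtain ⟨La, hLa, hrel⟩ := hrep.exists_conj_pow_eq_iterTransfer hpot n a ha
    exact ⟨La, congrFun hLa, hrel⟩
  · obtain ⟨c, hc⟩ := ZeroAtInftyContinuousMap.exists_eq_indicator_mul (isOpen_Dn hΔ hφ n) a ha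
      (b.continuous.comp_continuousOn (continuousOn_iterate_Dn hφ n))
      fun x _ => b.toBCF.norm_coe_le_norm (φ^[n] x)
    have hc₁ (x : X) (hx : x ∈ Dn Δ φ n) : c x = a x * b (φ^[n] x) := by
      rw [hc, Set.indicator_of_mem hx]
      rfl
    have hc₀ (x : X) (hx : x ∉ Dn Δ φ n) : c x = 0 := by
      rw [hc, Set.indicator_of_notMem hx]
    exact ⟨c, hc₁, hc₀, hrep.map_mul_pow_mul_eq hpot ha hc₁ hc₀⟩

/-- Iterated relations in a representation: `(T*)ⁿ π(a) Tⁿ = π(Lⁿ(a))` and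
`π(a) Tⁿ π(b) = π(a·(b∘φⁿ)) Tⁿ`. -/
theorem representation_iterated_relations
    {X : Type*} [TopologicalSpace X] [LocallyCompactSpace X] [T2Space X]
    (Δ : Set X) (φ : X → X) (ρ : X → ℝ) (M : ℝ)
    (hΔ : IsOpen Δ) (hφ : ContinuousOn φ Δ)
    (hcount : ∀ y : X, (Fiber Δ φ y).Countable)
    (hpot : IsPotential Δ φ ρ M)
    {H : Type*} [NormedAddCommGroup H] [InnerProductSpace ℂ H] [CompleteSpace H]
    (π : C₀(X, ℂ) →⋆ₙₐ[ℂ] (H →L[ℂ] H)) (T : H →L[ℂ] H)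
    (hrep : IsRep Δ φ ρ π T)
    (n : ℕ) (hn : 1 ≤ n) :
    ∀ a : C₀(X, ℂ), (∀ x ∉ Dn Δ φ n, a x = 0) →
      -- (i)
      ((∃ La : C₀(X, ℂ),
          (∀ y : X, La y = ∑' x : Fibern Δ φ n y, (rhon φ ρ n x.1 : ℂ) * a x.1) ∧
          (star T) ^ n * π a * T ^ n = π La) ∧
      -- (ii)
       (∀ b : C₀(X, ℂ), ∃ c : C₀(X, ℂ),
          (∀ x ∈ Dn Δ φ n, c x = a x * b (φ^[n] x)) ∧ (∀ x ∉ Dn Δ φ n, c x = 0) ∧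
          π a * T ^ n * π b = π c * T ^ n)) :=
  representation_iterated_relations_general Δ φ ρ M hΔ hφ hpot π T hrep n
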